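/- arXiv:2009.11515 — 6 statements merged into one kernel-verified Lean document; each statement's English description precedes it below -/
import Mathlib

section
/- Let n ≥ 1, let μ be the normalized Haar probability measure on the unitary group U(n), and let ξ ∈ ℂ with |ξ| = 1. Let Λ : U(n) → Multiset ℂ send Q to the multiset of roots (with multiplicity) of the characteristic polynomial of Q over ℂ. Then the pushforward of μ under Λ equals the pushforward of μ under the map Q ↦ (Λ Q).map (ξ · ·), i.e. the joint eigenvalue distribution of Haar-distributed unitary matrices is invariant under multiplication of all eigenvalues by any fixed unimodular scalar. -/
open MeasureTheory

noncomputable instance matrixMeasurableSpace {m n α : Type*} [MeasurableSpace α] :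
    MeasurableSpace (Matrix m n α) :=
  (inferInstance : MeasurableSpace (m → n → α))

/-- The multiset of eigenvalues (roots of the characteristic polynomial, with
multiplicity) of a complex matrix. -/
noncomputable def eigMultiset (n : ℕ) (A : Matrix (Fin n) (Fin n) ℂ) : Multiset ℂ :=
  A.charpoly.roots

/-!
Left multiplication by the scalar unitary `ξ • 1` preserves Haar measure, and it sends `Q` to
`ξ • Q`, whose characteristic polynomial is that of `Q` with its roots scaled by `ξ`.
-/

open Polynomial

theorem Polynomial.scaleRoots_eq_C_mul_comp {R : Type*} [CommRing R] (p : R[X]) (u : Rˣ) :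
    p.scaleRoots u = C ((u : R) ^ p.natDegree) * p.comp (C (↑u⁻¹ : R) * X) := by
  ext i
  rw [coeff_scaleRoots, coeff_C_mul, comp_C_mul_X_coeff]
  rcases le_or_gt i p.natDegree with hi | hi
  · rw [← Nat.sub_add_cancel hi, pow_add, Nat.add_sub_cancel, mul_assoc, mul_left_comm (_ ^ i),
      ← mul_pow, Units.mul_inv, one_pow, mul_one, mul_comm]
  · simp [coeff_eq_zero_of_natDegree_lt hi]

namespace Matrix

variable {R n : Type*} [CommRing R] [Fintype n] [DecidableEq n]

theorem charpoly_units_smul_eq_C_mul_comp (u : Rˣ) (A : Matrix n n R) :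
    (u • A).charpoly = C ((u : R) ^ Fintype.card n) * A.charpoly.comp (C (↑u⁻¹ : R) * X) := by
  rw [charpoly, charpoly, ← coe_compRingHom_apply, RingHom.map_det, C_pow, ← det_smul]
  congr 1
  ext i j : 1
  by_cases h : i = j
  · subst h
    simp [Units.smul_def, mul_sub, ← mul_assoc, ← map_mul]
  · simp [Units.smul_def, h]

theorem charpoly_units_smul [Nontrivial R] (u : Rˣ) (A : Matrix n n R) :
    (u • A).charpoly = A.charpoly.scaleRoots u := by
  rw [charpoly_units_smul_eq_C_mul_comp, scaleRoots_eq_C_mul_comp, charpoly_natDegree_eq_dim]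

theorem roots_charpoly_smul_of_isUnit [IsDomain R] {c : R} (hc : IsUnit c) (A : Matrix n n R) :
    (c • A).charpoly.roots = A.charpoly.roots.map (c * ·) := by
  obtain ⟨u, rfl⟩ := hc
  rw [← Units.smul_def, charpoly_units_smul, roots_scaleRoots _ u.isUnit]

end Matrix

theorem RCLike.mem_unitary_of_norm_eq_one {𝕜 : Type*} [RCLike 𝕜] {z : 𝕜} (hz : ‖z‖ = 1) :
    z ∈ unitary 𝕜 := by
  rw [Unitary.mem_iff_star_mul_self, RCLike.star_def, RCLike.conj_mul, hz]
  simp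

instance Matrix.borelSpace {m n α : Type*} [Countable m] [Countable n] [TopologicalSpace α]
    [SecondCountableTopology α] [MeasurableSpace α] [BorelSpace α] :
    BorelSpace (Matrix m n α) :=
  (inferInstance : BorelSpace (m → n → α))

instance Matrix.unitaryGroup.borelSpace {n 𝕜 : Type*} [Fintype n] [DecidableEq n] [RCLike 𝕜] :
    BorelSpace (Matrix.unitaryGroup n 𝕜) :=
  Subtype.borelSpace _

theorem haar_unitary_eigenvalues_mul_invariant_general (n : ℕ)
    (μ : Measure (Matrix.unitaryGroup (Fin n) ℂ))
    [μ.IsHaarMeasure]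
    (ξ : ℂ) (hξ : ‖ξ‖ = 1) :
    ∀ S : Set (Multiset ℂ),
      μ ((fun Q => eigMultiset n (Q : Matrix (Fin n) (Fin n) ℂ)) ⁻¹' S) =
      μ ((fun Q => (eigMultiset n (Q : Matrix (Fin n) (Fin n) ℂ)).map
          (fun z => ξ * z)) ⁻¹' S) := by
  intro S
  let u : unitary ℂ := ⟨ξ, RCLike.mem_unitary_of_norm_eq_one hξ⟩
  let g : Matrix.unitaryGroup (Fin n) ℂ := u • 1
  have eigMultiset_mul : ∀ Q : Matrix.unitaryGroup (Fin n) ℂ,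
      (eigMultiset n Q).map (ξ * ·) = eigMultiset n (g * Q : Matrix.unitaryGroup (Fin n) ℂ) := by
    intro Q
    simp [g, u, eigMultiset, Unitary.coe_smul, Matrix.roots_charpoly_smul_of_isUnit
      (Unitary.isUnit_coe (U := u))]
  simp_rw [eigMultiset_mul]
  exact (measure_preimage_mul μ g _).symm

/-- The joint eigenvalue distribution of Haar-distributed unitary matrices is invariant
under multiplication of all eigenvalues by a fixed unimodular scalar `ξ`: the pushforward
of the Haar probability measure under `Q ↦ Λ Q` equals its pushforward under
`Q ↦ (Λ Q).map (ξ * ·)`, as measured on every set of multisets. -/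
theorem haar_unitary_eigenvalues_mul_invariant (n : ℕ) (hn : 1 ≤ n)
    (μ : Measure (Matrix.unitaryGroup (Fin n) ℂ))
    [μ.IsHaarMeasure] [IsProbabilityMeasure μ]
    (ξ : ℂ) (hξ : ‖ξ‖ = 1) :
    ∀ S : Set (Multiset ℂ),
      μ ((fun Q => eigMultiset n (Q : Matrix (Fin n) (Fin n) ℂ)) ⁻¹' S) =
      μ ((fun Q => (eigMultiset n (Q : Matrix (Fin n) (Fin n) ℂ)).map
          (fun z => ξ * z)) ⁻¹' S) :=
  haar_unitary_eigenvalues_mul_invariant_general n μ ξ hξ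
end

section
/- Let n ≥ 2 and let H = P₁ ⋯ P_{n−1} · D be an n×n complex matrix, where for each j = 1, …, n−1, P_j = I − (2/‖v_j‖²) v_j v_j* is the Householder transformation of a nonzero vector v_j ∈ ℂⁿ whose entries vanish except possibly in positions j and j+1, and D is a unitary diagonal matrix (all diagonal entries of modulus 1). Then there exist plane rotations with real sines G₁, …, G_{n−1}, where G_j equals the identity except for the 2×2 block [[c_j, s_j], [−s_j, conj(c_j)]] in rows and columns j, j+1 with c_j ∈ ℂ, s_j ∈ ℝ, |c_j|² + s_j² = 1, and a unitary diagonal matrix D̃, such that H = G₁ ⋯ G_{n−1} · D̃. -/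
/-!
Since `v_j` is supported on `{j, j+1}`, `P_j` is the identity outside that block, and on it is
the Hermitian unitary `[[t, u], [conj u, -t]]` with `t` real; pulling the phase of `u` out to
the right writes it as a plane rotation with real sine times a unitary diagonal. A unitary
diagonal moves through a plane rotation to its right at the cost of a phase change in the
cosine and a swap of two diagonal entries, so all the diagonal factors can be collected at
the right end of the product.
-/

/-- The Householder transformation `P(v) = I - (2/‖v‖₂²) v v*` of a vector `v ∈ ℂⁿ`
(with `‖·‖₂` the Euclidean norm, so `‖v‖₂² = ∑ i, |v i|²`). -/
noncomputable def householder {n : ℕ} (v : Fin n → ℂ) : Matrix (Fin n) (Fin n) ℂ :=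
  1 - (((2 / ∑ i, Complex.normSq (v i) : ℝ) : ℂ)) • Matrix.vecMulVec v (star v)

/-- The plane rotation acting on indices `i, i'`, equal to the identity except for the
`2 × 2` block `[[c, s], [-s, conj c]]` in rows/columns `i, i'`. -/
noncomputable def planeRotAt {n : ℕ} (i i' : Fin n) (c : ℂ) (s : ℝ) :
    Matrix (Fin n) (Fin n) ℂ :=
  Matrix.of fun k l =>
    if k = i ∧ l = i then c
    else if k = i ∧ l = i' then (s : ℂ)
    else if k = i' ∧ l = i then (-s : ℂ)
    else if k = i' ∧ l = i' then starRingEnd ℂ c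
    else if k = l then 1 else 0

open Complex Matrix ComplexConjugate

lemma eq_or_eq_or_ne_and_ne {α : Type*} (x a b : α) : x = a ∨ x = b ∨ (x ≠ a ∧ x ≠ b) := by
  tauto

lemma exists_norm_eq_one_and_norm_mul_eq (z : ℂ) : ∃ ω : ℂ, ‖ω‖ = 1 ∧ ‖z‖ * ω = z :=
  ⟨_, norm_exp_ofReal_mul_I _, norm_mul_exp_arg_mul_I z⟩

section PlaneRotation

variable {n : ℕ} {i i' : Fin n}

lemma diagonal_mul_planeRotAt (hne : i ≠ i') (c : ℂ) (s : ℝ) {d : Fin n → ℂ}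
    (hdi : ‖d i‖ = 1) (hdi' : ‖d i'‖ = 1) :
    diagonal d * planeRotAt i i' c s =
      planeRotAt i i' (d i * c * conj (d i')) s * diagonal (d ∘ Equiv.swap i i') := by
  have hi : conj (d i) * d i = 1 := by simp [conj_mul', hdi]
  have hi' : conj (d i') * d i' = 1 := by simp [conj_mul', hdi']
  ext k l
  rw [diagonal_mul, mul_diagonal]
  rcases eq_or_eq_or_ne_and_ne k i i' with hk | hk | ⟨hk, hk'⟩ <;>
  rcases eq_or_eq_or_ne_and_ne l i i' with hl | hl | ⟨hl, hl'⟩ <;>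
  simp [planeRotAt, hne.symm, Equiv.swap_apply_of_ne_of_ne, *] <;> grind

/-- Writing `u = |u| ω` with `|ω| = 1`, the block `[[t, u], [conj u, -t]]` factors as
`[[-t ω, |u|], [-|u|, -t conj ω]] · diag(-conj ω, ω)`. -/
theorem exists_planeRotAt_mul_diagonal_eq (hne : i ≠ i') {M : Matrix (Fin n) (Fin n) ℂ}
    {t : ℝ} {u : ℂ} (htu : t ^ 2 + ‖u‖ ^ 2 = 1)
    (h₁₁ : M i i = t) (h₁₂ : M i i' = u) (h₂₁ : M i' i = conj u) (h₂₂ : M i' i' = -t)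
    (hoff : ∀ k l, (k ≠ i ∧ k ≠ i') ∨ (l ≠ i ∧ l ≠ i') → M k l = (1 : Matrix _ _ ℂ) k l) :
    ∃ (c : ℂ) (s : ℝ) (e : Fin n → ℂ), ‖c‖ ^ 2 + s ^ 2 = 1 ∧ (∀ k, ‖e k‖ = 1) ∧
      M = planeRotAt i i' c s * diagonal e := by
  obtain ⟨ω, hω, hωu⟩ := exists_norm_eq_one_and_norm_mul_eq u
  have hωu' : ‖u‖ * conj ω = conj u := by simpa using congrArg conj hωu
  refine ⟨-t * ω, ‖u‖, fun k => if k = i then -conj ω else if k = i' then ω else 1,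
    by rw [norm_mul, norm_neg, hω, norm_real, Real.norm_eq_abs, mul_one, sq_abs, htu], ?_, ?_⟩
  · intro k
    dsimp only
    split_ifs <;> simp [hω]
  ext k l
  rw [mul_diagonal]
  rcases eq_or_eq_or_ne_and_ne k i i' with hk | hk | ⟨hk, hk'⟩ <;>
  rcases eq_or_eq_or_ne_and_ne l i i' with hl | hl | ⟨hl, hl'⟩ <;>
  simp [planeRotAt, one_apply, hne.symm, mul_assoc, mul_conj', conj_mul', *]

lemma householder_apply (v : Fin n → ℂ) (k l : Fin n) :
    householder v k l =
      (1 : Matrix _ _ ℂ) k l - (2 / ∑ i, normSq (v i) : ℝ) * (v k * conj (v l)) := by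
  simp [householder, vecMulVec_apply]

theorem exists_householder_eq_planeRotAt_mul_diagonal (hne : i ≠ i') {v : Fin n → ℂ} (hv : v ≠ 0)
    (hsupp : ∀ k, k ≠ i → k ≠ i' → v k = 0) :
    ∃ (c : ℂ) (s : ℝ) (e : Fin n → ℂ), ‖c‖ ^ 2 + s ^ 2 = 1 ∧ (∀ k, ‖e k‖ = 1) ∧
      householder v = planeRotAt i i' c s * diagonal e := by
  have hsum : ∑ k, normSq (v k) = normSq (v i) + normSq (v i') :=
    Fintype.sum_eq_add i i' hne fun k hk => by rw [hsupp k hk.1 hk.2, map_zero]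
  have hN : 0 < normSq (v i) + normSq (v i') := by
    obtain ⟨k, hk⟩ := Function.ne_iff.mp hv
    rw [← hsum]
    exact Finset.sum_pos' (fun k _ => normSq_nonneg _) ⟨k, Finset.mem_univ _, normSq_pos.mpr hk⟩
  refine exists_planeRotAt_mul_diagonal_eq hne
    (t := 1 - 2 * normSq (v i) / (normSq (v i) + normSq (v i')))
    (u := -(2 / (normSq (v i) + normSq (v i')) : ℝ) * (v i * conj (v i'))) ?_ ?_ ?_ ?_ ?_ ?_
  · rw [← normSq_eq_norm_sq]
    simp only [normSq_mul, normSq_neg, normSq_ofReal, normSq_conj]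
    field_simp
    ring
  · rw [householder_apply, hsum, one_apply_eq, mul_conj]
    push_cast
    ring
  · rw [householder_apply, hsum, one_apply_ne hne]
    ring
  · rw [householder_apply, hsum, one_apply_ne hne.symm, map_mul, map_mul, map_neg, conj_ofReal,
      conj_conj]
    ring
  · have hN' : ((normSq (v i) + normSq (v i') : ℝ) : ℂ) ≠ 0 := ofReal_ne_zero.mpr hN.ne'
    rw [householder_apply, hsum, one_apply_eq, mul_conj]
    push_cast at hN' ⊢
    field_simp
    ring
  · rintro k l (⟨hk, hk'⟩ | ⟨hl, hl'⟩)
    · simp [householder_apply, hsupp k hk hk']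
    · simp [householder_apply, hsupp l hl hl']

end PlaneRotation

section AdjacentRotations

variable {n : ℕ}

def adjLo (j : Fin (n - 1)) : Fin n := ⟨j, by omega⟩

def adjHi (j : Fin (n - 1)) : Fin n := ⟨j + 1, by omega⟩

lemma adjLo_ne_adjHi (j : Fin (n - 1)) : adjLo j ≠ adjHi j := by
  simp [adjLo, adjHi, Fin.ext_iff]

noncomputable def adjRotProd (L : List (Fin (n - 1))) (c : Fin (n - 1) → ℂ)
    (s : Fin (n - 1) → ℝ) : Matrix (Fin n) (Fin n) ℂ :=
  (L.map fun j => planeRotAt (adjLo j) (adjHi j) (c j) (s j)).prod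

@[simp]
lemma adjRotProd_nil (c : Fin (n - 1) → ℂ) (s : Fin (n - 1) → ℝ) :
    adjRotProd [] c s = (1 : Matrix (Fin n) (Fin n) ℂ) :=
  rfl

lemma adjRotProd_cons (j : Fin (n - 1)) (L : List (Fin (n - 1))) (c : Fin (n - 1) → ℂ)
    (s : Fin (n - 1) → ℝ) :
    adjRotProd (j :: L) c s = planeRotAt (adjLo j) (adjHi j) (c j) (s j) * adjRotProd L c s :=
  List.prod_cons

lemma adjRotProd_cons_update {j : Fin (n - 1)} {L : List (Fin (n - 1))} (hj : j ∉ L)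
    (c : Fin (n - 1) → ℂ) (s : Fin (n - 1) → ℝ) (c₀ : ℂ) (s₀ : ℝ) :
    adjRotProd (j :: L) (Function.update c j c₀) (Function.update s j s₀) =
      planeRotAt (adjLo j) (adjHi j) c₀ s₀ * adjRotProd L c s := by
  rw [adjRotProd_cons, Function.update_self, Function.update_self, adjRotProd, adjRotProd]
  congr 2
  refine List.map_congr_left fun k hk => ?_
  have hkj : k ≠ j := by rintro rfl; exact hj hk
  rw [Function.update_of_ne hkj, Function.update_of_ne hkj]

theorem exists_diagonal_mul_adjRotProd_eq {L : List (Fin (n - 1))} (hL : L.Nodup)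
    (c : Fin (n - 1) → ℂ) (s : Fin (n - 1) → ℝ) {d : Fin n → ℂ} (hd : ∀ k, ‖d k‖ = 1) :
    ∃ (c' : Fin (n - 1) → ℂ) (d' : Fin n → ℂ), (∀ j, ‖c' j‖ = ‖c j‖) ∧ (∀ k, ‖d' k‖ = 1) ∧
      diagonal d * adjRotProd L c s = adjRotProd L c' s * diagonal d' := by
  induction L generalizing c d with
  | nil => exact ⟨c, d, fun _ => rfl, hd, by simp⟩
  | cons j L ih =>
    obtain ⟨hjL, hL⟩ := List.nodup_cons.mp hL
    obtain ⟨c', d', hc', hd', hpush⟩ := ih hL c (d := d ∘ Equiv.swap (adjLo j) (adjHi j))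
      fun k => hd _
    set c₀ := d (adjLo j) * c j * conj (d (adjHi j))
    refine ⟨Function.update c' j c₀, d', fun k => ?_, hd', ?_⟩
    · rcases eq_or_ne k j with rfl | hkj
      · simp [c₀, hd]
      · rw [Function.update_of_ne hkj, hc']
    · calc diagonal d * adjRotProd (j :: L) c s
          = planeRotAt (adjLo j) (adjHi j) c₀ (s j) *
              (diagonal (d ∘ Equiv.swap (adjLo j) (adjHi j)) * adjRotProd L c s) := by
            rw [adjRotProd_cons, ← mul_assoc,
              diagonal_mul_planeRotAt (adjLo_ne_adjHi j) _ _ (hd _) (hd _), mul_assoc]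
        _ = planeRotAt (adjLo j) (adjHi j) c₀ (s j) * adjRotProd L c' s * diagonal d' := by
            rw [hpush, mul_assoc]
        _ = adjRotProd (j :: L) (Function.update c' j c₀) s * diagonal d' := by
            rw [← adjRotProd_cons_update hjL, Function.update_eq_self]

theorem exists_householder_listProd_mul_diagonal_eq {L : List (Fin (n - 1))}
    (hL : L.Nodup) {v : Fin (n - 1) → Fin n → ℂ} (hv : ∀ j, v j ≠ 0)
    (hsupp : ∀ j k, k ≠ adjLo j → k ≠ adjHi j → v j k = 0) {D : Fin n → ℂ}
    (hD : ∀ k, ‖D k‖ = 1) :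
    ∃ (c : Fin (n - 1) → ℂ) (s : Fin (n - 1) → ℝ) (Dt : Fin n → ℂ),
      (∀ j, ‖c j‖ ^ 2 + s j ^ 2 = 1) ∧ (∀ k, ‖Dt k‖ = 1) ∧
      (L.map fun j => householder (v j)).prod * diagonal D = adjRotProd L c s * diagonal Dt := by
  induction L with
  | nil => exact ⟨fun _ => 1, fun _ => 0, D, by simp, hD, by simp⟩
  | cons j L ih =>
    obtain ⟨hjL, hL⟩ := List.nodup_cons.mp hL
    obtain ⟨c, s, Dt, hcs, hDt, hprod⟩ := ih hL
    obtain ⟨cj, sj, e, hcsj, he, hPj⟩ :=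
      exists_householder_eq_planeRotAt_mul_diagonal (adjLo_ne_adjHi j) (hv j) (hsupp j)
    obtain ⟨c', e', hc', he', hpush⟩ := exists_diagonal_mul_adjRotProd_eq hL c s he
    refine ⟨Function.update c' j cj, Function.update s j sj, fun k => e' k * Dt k, fun k => ?_,
      fun k => by simp [he', hDt], ?_⟩
    · rcases eq_or_ne k j with rfl | hkj
      · simpa using hcsj
      · simpa [Function.update_of_ne hkj, hc'] using hcs k
    · calc (householder (v j) :: L.map fun j => householder (v j)).prod * diagonal D
          = planeRotAt (adjLo j) (adjHi j) cj sj * (diagonal e * adjRotProd L c s) *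
              diagonal Dt := by
            rw [List.prod_cons, mul_assoc, hprod, hPj]
            simp only [mul_assoc]
        _ = planeRotAt (adjLo j) (adjHi j) cj sj * adjRotProd L c' s *
              diagonal fun k => e' k * Dt k := by
            rw [hpush, ← diagonal_mul_diagonal]
            simp only [mul_assoc]
        _ = _ := by rw [adjRotProd_cons_update hjL]

end AdjacentRotations

/-- Any product `H = P₁ ⋯ P_{n-1} D` of Householder transformations of nonzero vectors
`v_j` supported on positions `j, j+1`, times a unitary diagonal matrix `D`, can be
refactored as `H = G₁ ⋯ G_{n-1} D̃` where the `G_j` are plane rotations with real sines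
acting on indices `j, j+1` and `D̃` is a unitary diagonal matrix. -/
theorem householder_prod_diagonal_refactor (n : ℕ)
    (v : Fin (n - 1) → (Fin n → ℂ))
    (hv : ∀ j, v j ≠ 0)
    (hsupp : ∀ (j : Fin (n - 1)) (i : Fin n),
      (i : ℕ) ≠ (j : ℕ) → (i : ℕ) ≠ (j : ℕ) + 1 → v j i = 0)
    (D : Fin n → ℂ) (hD : ∀ i, ‖D i‖ = 1)
    (H : Matrix (Fin n) (Fin n) ℂ)
    (hH : H = ((List.finRange (n - 1)).map (fun j => householder (v j))).prod *
      Matrix.diagonal D) :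
    ∃ (c : Fin (n - 1) → ℂ) (s : Fin (n - 1) → ℝ) (Dt : Fin n → ℂ),
      (∀ j, ‖c j‖ ^ 2 + (s j) ^ 2 = 1) ∧
      (∀ i, ‖Dt i‖ = 1) ∧
      H = ((List.finRange (n - 1)).map (fun j : Fin (n - 1) =>
            planeRotAt (⟨(j : ℕ), by have := j.isLt; omega⟩ : Fin n)
              (⟨(j : ℕ) + 1, by have := j.isLt; omega⟩ : Fin n) (c j) (s j))).prod *
          Matrix.diagonal Dt := by
  subst hH
  exact exists_householder_listProd_mul_diagonal_eq (List.nodup_finRange _) hv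
    (fun j k hlo hhi => hsupp j k (fun h => hlo (Fin.ext h)) (fun h => hhi (Fin.ext h))) hD
end

section
/- Let U be any 2×2 complex unitary matrix (U*U = I). Then there exist c ∈ ℂ, s ∈ ℝ with |c|² + s² = 1, and d₁, d₂ ∈ ℂ with |d₁| = |d₂| = 1, such that U = [[c, s], [−s, conj(c)]] · diag(d₁, d₂). -/
/-!
A unitary `U` satisfies `adj U = det U • U*`, so its second column is `det U` times
`(-conj p, conj a)`, where `(a, p)` is its first column, a unit vector. Writing `p = -‖p‖ d₁` with
`|d₁| = 1`, the first column is `d₁ (c, -s)` with `c = a conj d₁` and `s = ‖p‖`, and the second is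
then `d₂ (s, conj c)` with `d₂ = det U · conj d₁`.
-/

open Complex Matrix

namespace Matrix

section CommRing

variable {n α : Type*} [Fintype n] [DecidableEq n] [CommRing α] [StarRing α]

theorem adjugate_eq_det_smul_star {U : Matrix n n α} (hU : U ∈ unitaryGroup n α) :
    adjugate U = U.det • star U := by
  calc adjugate U = adjugate U * U * star U := by rw [mul_assoc, hU.2, mul_one]
    _ = U.det • star U := by rw [adjugate_mul, smul_one_mul]

theorem eq_of_mem_unitaryGroup_fin_two {U : Matrix (Fin 2) (Fin 2) α}
    (hU : U ∈ unitaryGroup (Fin 2) α) :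
    U = !![U 0 0, -(U.det * star (U 1 0)); U 1 0, U.det * star (U 0 0)] := by
  have hadj := adjugate_eq_det_smul_star hU
  rw [adjugate_fin_two] at hadj
  have h01 : -U 0 1 = U.det * star (U 1 0) := by simpa using congrFun (congrFun hadj 0) 1
  have h11 : U 1 1 = U.det * star (U 0 0) := by simpa using congrFun (congrFun hadj 0) 0
  rw [← h01, ← h11, neg_neg]
  exact eta_fin_two U

end CommRing

theorem sq_norm_add_sq_norm_col_zero_eq_one {𝕜 : Type*} [RCLike 𝕜] {U : Matrix (Fin 2) (Fin 2) 𝕜}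
    (hU : U ∈ unitaryGroup (Fin 2) 𝕜) : ‖U 0 0‖ ^ 2 + ‖U 1 0‖ ^ 2 = 1 := by
  have h := congrFun (congrFun hU.1 0) 0
  simp only [mul_apply, Fin.sum_univ_two, star_apply, RCLike.star_def, RCLike.conj_mul,
    one_apply_eq] at h
  exact_mod_cast h

end Matrix

theorem exists_planeRot_mul_diagonal_eq (a p δ : ℂ) (hap : ‖a‖ ^ 2 + ‖p‖ ^ 2 = 1) (hδ : ‖δ‖ = 1) :
    ∃ (c : ℂ) (s : ℝ) (d₁ d₂ : ℂ),
      ‖c‖ ^ 2 + s ^ 2 = 1 ∧ ‖d₁‖ = 1 ∧ ‖d₂‖ = 1 ∧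
      !![a, -(δ * starRingEnd ℂ p); p, δ * starRingEnd ℂ a] =
        !![c, (s : ℂ); (-s : ℂ), starRingEnd ℂ c] * diagonal ![d₁, d₂] := by
  -- The polar factor of `p`; `p = ‖p‖ u` also holds at `p = 0`, so no case split is needed.
  set u := exp (arg p * I)
  have hu : ‖u‖ = 1 := norm_exp_ofReal_mul_I _
  have hpu : p = ‖p‖ * u := (norm_mul_exp_arg_mul_I p).symm
  have huu : starRingEnd ℂ u * u = 1 := by rw [conj_mul', hu]; norm_num
  have hpc : starRingEnd ℂ p = ‖p‖ * starRingEnd ℂ u := by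
    conv_lhs => rw [hpu]
    rw [map_mul, conj_ofReal]
  refine ⟨-(a * starRingEnd ℂ u), ‖p‖, -u, -(δ * starRingEnd ℂ u), ?_, ?_, ?_, ?_⟩
  · simpa [hu] using hap
  · simpa using hu
  · simp [hu, hδ]
  · ext i j
    fin_cases i <;> fin_cases j <;> simp only [mul_diagonal, of_apply, cons_val', cons_val_zero,
      cons_val_one, cons_val_fin_one, Fin.zero_eta, Fin.mk_one, Fin.isValue, map_neg, map_mul,
      conj_conj, mul_neg, neg_mul, neg_neg, neg_inj]
    · linear_combination (-a) * huu
    · linear_combination δ * hpc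
    · exact hpu
    · linear_combination (-(δ * starRingEnd ℂ a)) * huu

/-- Every `2 × 2` complex unitary matrix factors as a plane rotation with real sine
`[[c, s], [-s, conj c]]` times a unitary diagonal matrix `diag(d₁, d₂)`. -/
theorem unitary_two_eq_planeRot_mul_diagonal (U : Matrix (Fin 2) (Fin 2) ℂ)
    (hU : star U * U = 1) :
    ∃ (c : ℂ) (s : ℝ) (d₁ d₂ : ℂ),
      ‖c‖ ^ 2 + s ^ 2 = 1 ∧ ‖d₁‖ = 1 ∧ ‖d₂‖ = 1 ∧
      U = !![c, (s : ℂ); (-s : ℂ), starRingEnd ℂ c] * Matrix.diagonal ![d₁, d₂] := by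
  have hUmem : U ∈ unitaryGroup (Fin 2) ℂ := mem_unitaryGroup_iff'.mpr hU
  rw [eq_of_mem_unitaryGroup_fin_two hUmem]
  exact exists_planeRot_mul_diagonal_eq _ _ _ (sq_norm_add_sq_norm_col_zero_eq_one hUmem)
    (CStarRing.norm_of_mem_unitary (det_of_mem_unitary hUmem))
end

section
/- For 3×3 complex matrices, let G₁ and K₁ be plane rotations with real sines acting on indices (1,2), and let J₂ be a plane rotation with real sine acting on indices (2,3). Then there exist plane rotations with real sines G̃₂ and K̃₂ acting on indices (2,3) and J̃₁ acting on indices (1,2) such that G₁ · J₂ · K₁ = G̃₂ · J̃₁ · K̃₂ (the turnover operation). -/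
open Matrix ComplexConjugate

theorem Matrix.star_eq_adjugate_of_mem_specialUnitaryGroup {n α : Type*} [Fintype n]
    [DecidableEq n] [CommRing α] [StarRing α] {M : Matrix n n α}
    (hM : M ∈ specialUnitaryGroup n α) : star M = adjugate M := by
  obtain ⟨⟨-, hMstar⟩, hdet⟩ := hM
  calc star M = (adjugate M * M) * star M := by
        rw [adjugate_mul, show M.det = 1 from hdet, one_smul, one_mul]
    _ = adjugate M := by rw [Matrix.mul_assoc, hMstar, Matrix.mul_one]

section Complex

variable {n : Type*} [Fintype n] [DecidableEq n] {M : Matrix n n ℂ}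

theorem Matrix.conj_apply_eq_adjugate_apply_of_mem_specialUnitaryGroup
    (hM : M ∈ specialUnitaryGroup n ℂ) (i j : n) : conj (M i j) = adjugate M j i := by
  rw [← star_eq_adjugate_of_mem_specialUnitaryGroup hM]
  rfl

theorem Matrix.sum_norm_sq_col_of_mem_unitaryGroup (hM : M ∈ unitaryGroup n ℂ) (j : n) :
    ∑ i, ‖M i j‖ ^ 2 = 1 := by
  have := congr_fun₂ hM.1 j j
  simp only [mul_apply, star_apply, one_apply_eq, RCLike.star_def, mul_comm (conj _),
    Complex.mul_conj'] at this
  exact_mod_cast this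

theorem Matrix.sum_norm_sq_row_of_mem_unitaryGroup (hM : M ∈ unitaryGroup n ℂ) (i : n) :
    ∑ j, ‖M i j‖ ^ 2 = 1 := by
  have := congr_fun₂ hM.2 i i
  simp only [mul_apply, star_apply, one_apply_eq, RCLike.star_def, Complex.mul_conj'] at this
  exact_mod_cast this

end Complex

theorem planeRotAt_mem_specialUnitaryGroup {i i' : Fin 3} (hii' : i ≠ i') {c : ℂ} {s : ℝ}
    (h : ‖c‖ ^ 2 + s ^ 2 = 1) : planeRotAt i i' c s ∈ specialUnitaryGroup (Fin 3) ℂ := by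
  have hc : c * conj c = 1 - (s : ℂ) ^ 2 := by
    rw [Complex.mul_conj', eq_sub_iff_add_eq]
    exact_mod_cast h
  rw [mem_specialUnitaryGroup_iff, mem_unitaryGroup_iff]
  constructor
  · ext k l
    fin_cases i <;> fin_cases i' <;> simp only [ne_eq, not_true_eq_false] at hii' <;>
      fin_cases k <;> fin_cases l <;> simp [planeRotAt, mul_apply, Fin.sum_univ_three] <;>
      first | ring1 | linear_combination hc
  · fin_cases i <;> fin_cases i' <;> simp only [ne_eq, not_true_eq_false] at hii' <;>
      simp [planeRotAt, det_fin_three] <;> linear_combination hc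

theorem planeRotAt_one_two_mul_planeRotAt_zero_one_mul_planeRotAt_one_two
    (a₁ a₂ a₃ : ℂ) (b₁ b₂ b₃ : ℝ) :
    planeRotAt (1 : Fin 3) 2 a₁ b₁ * planeRotAt (0 : Fin 3) 1 a₂ b₂ *
        planeRotAt (1 : Fin 3) 2 a₃ b₃ =
      !![a₂, b₂ * a₃, b₂ * b₃;
        -(a₁ * b₂), a₁ * conj a₂ * a₃ - b₁ * b₃, a₁ * conj a₂ * b₃ + b₁ * conj a₃;
        b₁ * b₂, -(b₁ * conj a₂ * a₃) - conj a₁ * b₃,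
          -(b₁ * conj a₂ * b₃) + conj a₁ * conj a₃] := by
  ext i j
  fin_cases i <;> fin_cases j <;> simp [planeRotAt, mul_apply, Fin.sum_univ_three] <;> ring

-- The shape `G̃₂ J̃₁ K̃₂`, with indices `(2,3), (1,2), (2,3)` counted from 1 as in the paper.
def IsRealSineRot212Product (M : Matrix (Fin 3) (Fin 3) ℂ) : Prop :=
  ∃ (a₁ : ℂ) (b₁ : ℝ) (a₂ : ℂ) (b₂ : ℝ) (a₃ : ℂ) (b₃ : ℝ),
    ‖a₁‖ ^ 2 + b₁ ^ 2 = 1 ∧ ‖a₂‖ ^ 2 + b₂ ^ 2 = 1 ∧ ‖a₃‖ ^ 2 + b₃ ^ 2 = 1 ∧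
      M = planeRotAt (1 : Fin 3) 2 a₁ b₁ * planeRotAt (0 : Fin 3) 1 a₂ b₂ *
        planeRotAt (1 : Fin 3) 2 a₃ b₃

section SpecialUnitary

variable {M : Matrix (Fin 3) (Fin 3) ℂ} (hM : M ∈ specialUnitaryGroup (Fin 3) ℂ)
include hM

theorem isRealSineRot212Product_of_norm_lt_one {q t : ℝ} (hq : M 0 2 = q) (ht : M 2 0 = t)
    (h00 : ‖M 0 0‖ < 1) : IsRealSineRot212Product M := by
  have cof := conj_apply_eq_adjugate_apply_of_mem_specialUnitaryGroup hM
  have C11 : conj (M 1 1) = M 0 0 * M 2 2 - q * t := by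
    simpa [adjugate_fin_three, hq, ht] using cof 1 1
  have C12 : conj (M 1 2) = -(M 0 0 * M 2 1) + M 0 1 * t := by
    simpa [adjugate_fin_three, hq, ht] using cof 1 2
  have C21 : conj (M 2 1) = -(M 0 0 * M 1 2) + q * M 1 0 := by
    simpa [adjugate_fin_three, hq, ht] using cof 2 1
  have C22 : conj (M 2 2) = M 0 0 * M 1 1 - M 0 1 * M 1 0 := by
    simpa [adjugate_fin_three, hq, ht] using cof 2 2
  have K11 : M 1 1 = conj (M 0 0) * conj (M 2 2) - q * t := by
    simpa using congrArg conj C11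
  have K12 : M 1 2 = -(conj (M 0 0) * conj (M 2 1)) + conj (M 0 1) * t := by
    simpa using congrArg conj C12
  have K21 : M 2 1 = -(conj (M 0 0) * conj (M 1 2)) + q * conj (M 1 0) := by
    simpa using congrArg conj C21
  have K22 : M 2 2 = conj (M 0 0) * conj (M 1 1) - conj (M 0 1) * conj (M 1 0) := by
    simpa using congrArg conj C22
  have hcol := sum_norm_sq_col_of_mem_unitaryGroup hM.1 0
  have hrow := sum_norm_sq_row_of_mem_unitaryGroup hM.1 0
  simp only [Fin.sum_univ_three, hq, ht, Complex.norm_real, Real.norm_eq_abs, sq_abs]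
    at hcol hrow
  set r := √(1 - ‖M 0 0‖ ^ 2)
  have hr : 0 < r := Real.sqrt_pos.mpr (by nlinarith [norm_nonneg (M 0 0)])
  have hr2 : r ^ 2 = 1 - ‖M 0 0‖ ^ 2 := Real.sq_sqrt (by nlinarith [norm_nonneg (M 0 0)])
  have R : (r : ℂ) ^ 2 = 1 - M 0 0 * conj (M 0 0) := by
    rw [Complex.mul_conj']
    exact_mod_cast hr2
  have hr0 : (r : ℂ) ≠ 0 := by exact_mod_cast hr.ne'
  refine ⟨-M 1 0 / r, t / r, M 0 0, r, M 0 1 / r, q / r, ?_, ?_, ?_, ?_⟩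
  · rw [norm_div, norm_neg, Complex.norm_real, Real.norm_eq_abs, abs_of_pos hr, div_pow,
      div_pow, ← add_div, div_eq_one_iff_eq (by positivity)]
    linarith
  · linarith
  · rw [norm_div, Complex.norm_real, Real.norm_eq_abs, abs_of_pos hr, div_pow, div_pow,
      ← add_div, div_eq_one_iff_eq (by positivity)]
    linarith
  rw [planeRotAt_one_two_mul_planeRotAt_zero_one_mul_planeRotAt_one_two]
  ext i j
  fin_cases i <;> fin_cases j <;> simp [hq, ht] <;> field_simp
  · linear_combination M 1 1 * R + conj (M 0 0) * C22 + K11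
  · linear_combination M 1 2 * R - conj (M 0 0) * C21 + K12
  · linear_combination M 2 1 * R - conj (M 0 0) * C12 + K21
  · linear_combination M 2 2 * R + conj (M 0 0) * C11 + K22

theorem isRealSineRot212Product_of_norm_eq_one (h00 : ‖M 0 0‖ = 1) :
    IsRealSineRot212Product M := by
  have hcol := sum_norm_sq_col_of_mem_unitaryGroup hM.1 0
  have hrow := sum_norm_sq_row_of_mem_unitaryGroup hM.1 0
  have hrow1 := sum_norm_sq_row_of_mem_unitaryGroup hM.1 1
  simp only [Fin.sum_univ_three, h00] at hcol hrow hrow1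
  have h10 : M 1 0 = 0 := by
    simpa using (by nlinarith [sq_nonneg ‖M 2 0‖] : ‖M 1 0‖ ^ 2 = 0)
  have h20 : M 2 0 = 0 := by
    simpa using (by nlinarith [sq_nonneg ‖M 1 0‖] : ‖M 2 0‖ ^ 2 = 0)
  have h01 : M 0 1 = 0 := by
    simpa using (by nlinarith [sq_nonneg ‖M 0 2‖] : ‖M 0 1‖ ^ 2 = 0)
  have h02 : M 0 2 = 0 := by
    simpa using (by nlinarith [sq_nonneg ‖M 0 1‖] : ‖M 0 2‖ ^ 2 = 0)
  have cof := conj_apply_eq_adjugate_apply_of_mem_specialUnitaryGroup hM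
  have C11 : conj (M 1 1) = M 0 0 * M 2 2 := by
    simpa [adjugate_fin_three, h02, h20] using cof 1 1
  have C12 : conj (M 1 2) = -(M 0 0 * M 2 1) := by
    simpa [adjugate_fin_three, h20] using cof 1 2
  have hm : M 0 0 * conj (M 0 0) = 1 := by
    rw [Complex.mul_conj', h00]
    norm_num
  set u := Complex.exp (Complex.arg (M 1 2) * Complex.I)
  have hu_norm : ‖u‖ = 1 := Complex.norm_exp_ofReal_mul_I _
  have hu : u * conj u = 1 := by
    rw [Complex.mul_conj', hu_norm]
    norm_num
  have hpolar : (‖M 1 2‖ : ℂ) * u = M 1 2 := Complex.norm_mul_exp_arg_mul_I _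
  have hpolar' : (‖M 1 2‖ : ℂ) * conj u = conj (M 1 2) := by
    simpa using congrArg conj hpolar
  refine ⟨M 0 0 * u, 0, M 0 0, 0, M 1 1 * conj u, ‖M 1 2‖, ?_, ?_, ?_, ?_⟩
  · simp [h00, hu_norm]
  · simp [h00]
  · simpa [hu_norm, h10] using hrow1
  rw [planeRotAt_one_two_mul_planeRotAt_zero_one_mul_planeRotAt_one_two]
  ext i j
  fin_cases i <;> fin_cases j <;> simp [h10, h20, h01, h02]
  · linear_combination -(M 1 1 * u * conj u) * hm - M 1 1 * hu
  · linear_combination -(u * ‖M 1 2‖) * hm - hpolar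
  · linear_combination conj (M 0 0) * hpolar' + conj (M 0 0) * C12 - M 2 1 * hm
  · linear_combination -(M 2 2) * hm - conj (M 0 0) * C11 - conj (M 0 0) * conj (M 1 1) * hu

theorem isRealSineRot212Product_of_mem_specialUnitaryGroup {q t : ℝ} (hq : M 0 2 = q)
    (ht : M 2 0 = t) : IsRealSineRot212Product M := by
  have hcol := sum_norm_sq_col_of_mem_unitaryGroup hM.1 0
  simp only [Fin.sum_univ_three] at hcol
  have h00 : ‖M 0 0‖ ≤ 1 := by
    nlinarith [norm_nonneg (M 0 0), sq_nonneg ‖M 1 0‖, sq_nonneg ‖M 2 0‖]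
  rcases h00.lt_or_eq with h00 | h00
  · exact isRealSineRot212Product_of_norm_lt_one hM hq ht h00
  · exact isRealSineRot212Product_of_norm_eq_one hM h00

end SpecialUnitary

/-- The turnover operation: for `3 × 3` matrices, a product `G₁ J₂ K₁` with `G₁, K₁`
plane rotations with real sines acting on indices `(1,2)` and `J₂` a plane rotation
with real sine acting on indices `(2,3)` can be refactored as `G̃₂ J̃₁ K̃₂` with
`G̃₂, K̃₂` acting on `(2,3)` and `J̃₁` acting on `(1,2)`. -/
theorem planeRot_turnover
    (c₁ : ℂ) (s₁ : ℝ) (h₁ : ‖c₁‖ ^ 2 + s₁ ^ 2 = 1)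
    (c₂ : ℂ) (s₂ : ℝ) (h₂ : ‖c₂‖ ^ 2 + s₂ ^ 2 = 1)
    (c₃ : ℂ) (s₃ : ℝ) (h₃ : ‖c₃‖ ^ 2 + s₃ ^ 2 = 1) :
    ∃ (a₁ : ℂ) (b₁ : ℝ) (a₂ : ℂ) (b₂ : ℝ) (a₃ : ℂ) (b₃ : ℝ),
      ‖a₁‖ ^ 2 + b₁ ^ 2 = 1 ∧
      ‖a₂‖ ^ 2 + b₂ ^ 2 = 1 ∧
      ‖a₃‖ ^ 2 + b₃ ^ 2 = 1 ∧
      planeRotAt (0 : Fin 3) 1 c₁ s₁ * planeRotAt (1 : Fin 3) 2 c₂ s₂ *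
          planeRotAt (0 : Fin 3) 1 c₃ s₃ =
        planeRotAt (1 : Fin 3) 2 a₁ b₁ * planeRotAt (0 : Fin 3) 1 a₂ b₂ *
          planeRotAt (1 : Fin 3) 2 a₃ b₃ := by
  have hG₁ := planeRotAt_mem_specialUnitaryGroup (by decide : (0 : Fin 3) ≠ 1) h₁
  have hJ₂ := planeRotAt_mem_specialUnitaryGroup (by decide : (1 : Fin 3) ≠ 2) h₂
  have hK₁ := planeRotAt_mem_specialUnitaryGroup (by decide : (0 : Fin 3) ≠ 1) h₃
  refine isRealSineRot212Product_of_mem_specialUnitaryGroup (mul_mem (mul_mem hG₁ hJ₂) hK₁)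
    (q := s₁ * s₂) (t := s₂ * s₃) ?_ ?_ <;>
  simp [planeRotAt, mul_apply, Fin.sum_univ_three]
end

section
/- Let n ≥ 2, let R be an n×n complex upper triangular matrix, and let G be a unitary core transformation acting on indices (i, i+1) for some 1 ≤ i ≤ n−1, i.e. G equals the identity except for a 2×2 unitary block in rows/columns i and i+1. Then there exist a unitary core transformation G̃ acting on the same indices (i, i+1) and an upper triangular matrix R̃ such that R·G = G̃·R̃ (the passthrough operation). -/
/-!
Call `Q` a core transformation at `(i, j)` if it is the identity outside rows and columns
`i, j`. When `j` covers `i`, a core transformation at `(i, j)` is block upper triangular for the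
blocks `{i, j}` and singletons, which is the block structure `update id j i`; so is every upper
triangular matrix, and hence so is `R G`. The only entry of `R G` below the diagonal is thus
`(j, i)`, and a Givens rotation `Q` at `(i, j)` with `(Qᴴ R G) j i = 0` gives `R G = Q (Qᴴ R G)`
with `Qᴴ R G` upper triangular.
-/

open Matrix Function

namespace Function.Embedding

variable {ι κ : Type*} (φ : κ ↪ ι)

open Classical in
noncomputable def sumRangeComplEquiv : κ ⊕ {k // k ∉ Set.range φ} ≃ ι :=
  (Equiv.sumCongr (Equiv.ofInjective φ φ.injective) (Equiv.refl _)).trans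
    (Equiv.sumCompl (· ∈ Set.range φ))

variable {φ}

@[simp]
theorem sumRangeComplEquiv_apply_inl (a : κ) : φ.sumRangeComplEquiv (Sum.inl a) = φ a := rfl

@[simp]
theorem sumRangeComplEquiv_symm_apply (a : κ) : φ.sumRangeComplEquiv.symm (φ a) = Sum.inl a := by
  rw [Equiv.symm_apply_eq]; rfl

end Function.Embedding

namespace Matrix

section BlockEmbedding

variable {ι κ α : Type*} (φ : κ ↪ ι) [DecidableEq ι]

noncomputable def blockEmbed [Zero α] [One α] (U : Matrix κ κ α) : Matrix ι ι α :=
  reindex φ.sumRangeComplEquiv φ.sumRangeComplEquiv (fromBlocks U 0 0 1)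

variable {φ}

@[simp]
theorem blockEmbed_apply_apply [Zero α] [One α] (U : Matrix κ κ α) (a b : κ) :
    blockEmbed φ U (φ a) (φ b) = U a b := by
  simp [blockEmbed]

theorem blockEmbed_apply_of_notMem [Zero α] [One α] (U : Matrix κ κ α) {k l : ι}
    (h : k ∉ Set.range φ ∨ l ∉ Set.range φ) :
    blockEmbed φ U k l = (1 : Matrix ι ι α) k l := by
  obtain ⟨k, rfl⟩ := φ.sumRangeComplEquiv.surjective k
  obtain ⟨l, rfl⟩ := φ.sumRangeComplEquiv.surjective l
  simp only [blockEmbed, reindex_apply, submatrix_apply, Equiv.symm_apply_apply]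
  rcases k with a | ⟨k, hk⟩ <;> rcases l with b | ⟨l, hl⟩
  · simp at h
  · exact (one_apply_ne fun h => hl ⟨a, h⟩).symm
  · exact (one_apply_ne fun h => hk ⟨b, h.symm⟩).symm
  · by_cases hkl : k = l
    · subst hkl; simp
    · rw [fromBlocks_apply₂₂, one_apply_ne (by simpa using hkl)]
      exact (one_apply_ne hkl).symm

theorem blockEmbed_mul [Fintype κ] [Fintype ι] [Semiring α] (U V : Matrix κ κ α) :
    blockEmbed φ (U * V) = blockEmbed φ U * blockEmbed φ V := by
  simp [blockEmbed, fromBlocks_multiply]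

theorem blockEmbed_one [DecidableEq κ] [Zero α] [One α] :
    blockEmbed φ (1 : Matrix κ κ α) = 1 := by
  simp [blockEmbed, fromBlocks_one]

theorem blockEmbed_conjTranspose [Semiring α] [StarRing α] (U : Matrix κ κ α) :
    (blockEmbed φ U)ᴴ = blockEmbed φ Uᴴ := by
  simp [blockEmbed, fromBlocks_conjTranspose]

end BlockEmbedding

variable {ι α : Type*}

def IsCoreAt [DecidableEq ι] [Zero α] [One α] (i j : ι) (G : Matrix ι ι α) : Prop :=
  ∀ k l, ¬((k = i ∨ k = j) ∧ (l = i ∨ l = j)) → G k l = (1 : Matrix ι ι α) k l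

theorem IsCoreAt.conjTranspose [DecidableEq ι] [Semiring α] [StarRing α] {i j : ι}
    {G : Matrix ι ι α} (hG : IsCoreAt i j G) : IsCoreAt i j Gᴴ := fun k l hkl => by
  rw [conjTranspose_apply, hG l k fun h => hkl h.symm, ← conjTranspose_apply, conjTranspose_one]

theorem IsCoreAt.blockTriangular [DecidableEq ι] [Preorder ι] [Zero α] [One α] {i j : ι}
    {G : Matrix ι ι α} (hG : IsCoreAt i j G) : G.BlockTriangular (update id j i) := by
  intro k l hlk
  have hkl : k ≠ l := by rintro rfl; exact lt_irrefl _ hlk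
  have hblock : ∀ m, m = i ∨ m = j → update id j i m = i := by
    rintro m (rfl | rfl) <;> simp [update_apply]
  rw [hG k l ?_, one_apply_ne hkl]
  rintro ⟨hk, hl⟩
  rw [hblock k hk, hblock l hl] at hlk
  exact lt_irrefl _ hlk

theorem monotone_update_id_of_covBy [LinearOrder ι] {i j : ι} (hij : i ⋖ j) :
    Monotone (update id j i) := by
  intro k l hkl
  simp only [update_apply, id]
  split_ifs with hk hl hl
  · exact le_rfl
  · subst hk
    exact hij.lt.le.trans hkl
  · exact hij.le_of_lt (lt_of_le_of_ne (hl ▸ hkl) hk)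
  · exact hkl

theorem IsUpperTriangular.blockTriangular_of_monotone {β : Type*} [LinearOrder ι] [Preorder β]
    [Zero α] {M : Matrix ι ι α} {b : ι → β} (hM : M.IsUpperTriangular) (hb : Monotone b) :
    M.BlockTriangular b :=
  fun _ _ h => hM (hb.reflect_lt h)

theorem isUpperTriangular_of_blockTriangular_update [LinearOrder ι] [Zero α] {i j : ι}
    (hij : i ⋖ j) {M : Matrix ι ι α} (hM : M.BlockTriangular (update id j i))
    (hji : M j i = 0) :
    M.IsUpperTriangular := by
  intro k l (hlk : l < k)
  by_cases hk : k = j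
  · subst hk
    rcases (hij.le_of_lt hlk).eq_or_lt with rfl | hli
    · exact hji
    · exact hM (by simpa [update_of_ne hlk.ne] using hli)
  · refine hM (lt_of_le_of_lt ?_ (by simpa [hk] using hlk))
    rw [update_apply]
    split_ifs with hl
    · exact hl ▸ hij.lt.le
    · exact le_rfl

def givens [Star α] [Neg α] (c s : α) : Matrix (Fin 2) (Fin 2) α :=
  !![c, -star s; s, star c]

theorem conjTranspose_givens_mul_givens [CommRing α] [StarRing α] {c s : α}
    (h : star c * c + star s * s = 1) : (givens c s)ᴴ * givens c s = 1 := by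
  ext a b
  fin_cases a <;> fin_cases b <;> simp [givens, mul_apply, Fin.sum_univ_two]
  · exact h
  · ring
  · ring
  · linear_combination h

theorem exists_givens_coeffs (a b : ℂ) :
    ∃ c s : ℂ, star c * c + star s * s = 1 ∧ c * b = s * a := by
  rcases eq_or_ne b 0 with rfl | hb
  · exact ⟨1, 0, by simp, by simp⟩
  set r : ℝ := √(‖a‖ ^ 2 + ‖b‖ ^ 2)
  have hr : (r : ℂ) ^ 2 = ‖a‖ ^ 2 + ‖b‖ ^ 2 := by
    exact_mod_cast Real.sq_sqrt (by positivity)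
  have hr0 : (r : ℂ) ≠ 0 := by
    have : 0 < r := Real.sqrt_pos.2 (add_pos_of_nonneg_of_pos (by positivity)
      (pow_pos (norm_pos_iff.2 hb) 2))
    exact_mod_cast this.ne'
  refine ⟨a / r, b / r, ?_, by ring⟩
  calc star (a / r) * (a / r) + star (b / r) * (b / r)
      = ((‖a‖ : ℂ) ^ 2 + (‖b‖ : ℂ) ^ 2) / r ^ 2 := by
        simp only [star_div₀, Complex.star_def, Complex.conj_ofReal, ← Complex.conj_mul']
        ring
    _ = 1 := by rw [← hr, div_self (pow_ne_zero 2 hr0)]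

theorem exists_unitary_isCoreAt_conjTranspose_mul_apply_eq_zero [Fintype ι] [DecidableEq ι]
    {i j : ι} (hij : i ≠ j) (M : Matrix ι ι ℂ) :
    ∃ Q : Matrix ι ι ℂ, Qᴴ * Q = 1 ∧ IsCoreAt i j Q ∧ (Qᴴ * M) j i = 0 := by
  obtain ⟨c, s, hcs, hcb⟩ := exists_givens_coeffs (M i i) (M j i)
  let φ : Fin 2 ↪ ι := ⟨![i, j], by
    intro a b; fin_cases a <;> fin_cases b <;> simp [hij, hij.symm]⟩
  have hQ : IsCoreAt i j (blockEmbed φ (givens c s)) := fun k l hkl =>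
    blockEmbed_apply_of_notMem _ (by simp [φ]; tauto)
  refine ⟨blockEmbed φ (givens c s), ?_, hQ, ?_⟩
  · rw [blockEmbed_conjTranspose, ← blockEmbed_mul, conjTranspose_givens_mul_givens hcs,
      blockEmbed_one]
  · have hQij : blockEmbed φ (givens c s) i j = -star s := blockEmbed_apply_apply _ 0 1
    have hQjj : blockEmbed φ (givens c s) j j = star c := blockEmbed_apply_apply _ 1 1
    rw [mul_apply, Fintype.sum_eq_add i j hij]
    · rw [conjTranspose_apply, conjTranspose_apply, hQij, hQjj, star_neg, star_star, star_star]
      linear_combination hcb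
    · rintro k ⟨hki, hkj⟩
      rw [conjTranspose_apply, hQ k j (by tauto), one_apply_ne hkj, star_zero, zero_mul]

theorem exists_passthrough [LinearOrder ι] [Fintype ι] {i j : ι} (hij : i ⋖ j)
    {R G : Matrix ι ι ℂ} (hR : R.IsUpperTriangular) (hG : IsCoreAt i j G) :
    ∃ Q T : Matrix ι ι ℂ,
      Qᴴ * Q = 1 ∧ IsCoreAt i j Q ∧ T.IsUpperTriangular ∧ R * G = Q * T := by
  obtain ⟨Q, hQu, hQ, hQji⟩ :=
    exists_unitary_isCoreAt_conjTranspose_mul_apply_eq_zero hij.ne (R * G)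
  refine ⟨Q, Qᴴ * (R * G), hQu, hQ, ?_, ?_⟩
  · refine isUpperTriangular_of_blockTriangular_update hij ?_ hQji
    exact hQ.conjTranspose.blockTriangular.mul
      ((hR.blockTriangular_of_monotone (monotone_update_id_of_covBy hij)).mul hG.blockTriangular)
  · rw [← Matrix.mul_assoc, mul_eq_one_comm.mp hQu, Matrix.one_mul]

theorem isCoreAt_fin_iff {n : ℕ} {i : Fin n} (hi : (i : ℕ) + 1 < n)
    (G : Matrix (Fin n) (Fin n) ℂ) :
    IsCoreAt i ⟨i + 1, hi⟩ G ↔ ∀ k l : Fin n,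
      ¬(((k : ℕ) = (i : ℕ) ∨ (k : ℕ) = (i : ℕ) + 1) ∧
        ((l : ℕ) = (i : ℕ) ∨ (l : ℕ) = (i : ℕ) + 1)) →
      G k l = if k = l then 1 else 0 := by
  simp only [IsCoreAt, Fin.ext_iff, one_apply]

end Matrix

theorem core_passthrough_general (n : ℕ)
    (R : Matrix (Fin n) (Fin n) ℂ)
    (hR : ∀ i j : Fin n, (j : ℕ) < (i : ℕ) → R i j = 0)
    (i : Fin n) (hi : (i : ℕ) + 1 < n)
    (G : Matrix (Fin n) (Fin n) ℂ)
    (hG : ∀ k l : Fin n,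
      ¬(((k : ℕ) = (i : ℕ) ∨ (k : ℕ) = (i : ℕ) + 1) ∧
        ((l : ℕ) = (i : ℕ) ∨ (l : ℕ) = (i : ℕ) + 1)) →
      G k l = if k = l then 1 else 0) :
    ∃ (Gt Rt : Matrix (Fin n) (Fin n) ℂ),
      star Gt * Gt = 1 ∧
      (∀ k l : Fin n,
        ¬(((k : ℕ) = (i : ℕ) ∨ (k : ℕ) = (i : ℕ) + 1) ∧
          ((l : ℕ) = (i : ℕ) ∨ (l : ℕ) = (i : ℕ) + 1)) →
        Gt k l = if k = l then 1 else 0) ∧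
      (∀ i' j' : Fin n, (j' : ℕ) < (i' : ℕ) → Rt i' j' = 0) ∧
      R * G = Gt * Rt := by
  obtain ⟨Q, T, hQu, hQ, hT, hRG⟩ := exists_passthrough (j := ⟨i + 1, hi⟩)
    (by simp [Fin.covBy_iff]) (fun k l => hR k l) ((isCoreAt_fin_iff hi G).2 hG)
  exact ⟨Q, T, hQu, (isCoreAt_fin_iff hi Q).1 hQ, fun k l h => hT h, hRG⟩

/-- The passthrough operation: if `R` is upper triangular and `G` is a unitary core
transformation acting on indices `(i, i+1)` (i.e. `G` is unitary and equal to the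
identity outside the `2 × 2` principal block in rows/columns `i, i+1`), then there are
a unitary core transformation `G̃` acting on the same indices and an upper triangular
matrix `R̃` with `R G = G̃ R̃`. -/
theorem core_passthrough (n : ℕ) (hn : 2 ≤ n)
    (R : Matrix (Fin n) (Fin n) ℂ)
    (hR : ∀ i j : Fin n, (j : ℕ) < (i : ℕ) → R i j = 0)
    (i : Fin n) (hi : (i : ℕ) + 1 < n)
    (G : Matrix (Fin n) (Fin n) ℂ)
    (hGu : star G * G = 1)
    (hG : ∀ k l : Fin n,
      ¬(((k : ℕ) = (i : ℕ) ∨ (k : ℕ) = (i : ℕ) + 1) ∧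
        ((l : ℕ) = (i : ℕ) ∨ (l : ℕ) = (i : ℕ) + 1)) →
      G k l = if k = l then 1 else 0) :
    ∃ (Gt Rt : Matrix (Fin n) (Fin n) ℂ),
      star Gt * Gt = 1 ∧
      (∀ k l : Fin n,
        ¬(((k : ℕ) = (i : ℕ) ∨ (k : ℕ) = (i : ℕ) + 1) ∧
          ((l : ℕ) = (i : ℕ) ∨ (l : ℕ) = (i : ℕ) + 1)) →
        Gt k l = if k = l then 1 else 0) ∧
      (∀ i' j' : Fin n, (j' : ℕ) < (i' : ℕ) → Rt i' j' = 0) ∧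
      R * G = Gt * Rt :=
  core_passthrough_general n R hR i hi G hG
end

section
/- Let n ≥ 1 and let u ∈ ℂⁿ be nonzero. Set θ = Arg(u₁) (the principal argument of the first entry of u, with Arg(0) = 0) and v = u + e^{iθ}·‖u‖₂·e₁, where e₁ is the first standard basis vector. Then v ≠ 0 and the Householder transformation P(v) = I − (2/‖v‖₂²) v v* satisfies P(v)·u = −e^{iθ}·‖u‖₂·e₁. -/
/-!
The reflection `P(x - y)` sends `x` to `y` as soon as `‖x‖ = ‖y‖` and `⟪x, y⟫` is real: then
`‖x - y‖² = 2 ⟪x - y, x⟫`, so `P(x - y) x = x - (x - y) = y`. For `y = -e^{iθ} ‖u‖ e₁` the phase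
`θ = Arg u₁` makes `⟪y, u⟫ = -‖u‖ |u₁|` real, and its sign also forbids `u = y`, i.e. `v = 0`.
-/

open Complex Matrix ComplexConjugate
open scoped ComplexOrder

section DotProduct

variable {ι : Type*}

theorem add_smul_single_ne_zero [DecidableEq ι] {u : ι → ℂ} {c : ℂ} {i : ι} (hu : u ≠ 0)
    (hphase : 0 ≤ conj c * u i) : u + c • Pi.single i 1 ≠ 0 := by
  intro h
  have hui : u i = -c := eq_neg_of_add_eq_zero_left (by simpa using congr_fun h i)
  have hc : c = 0 := by
    rw [hui, mul_neg, ← normSq_eq_conj_mul_self, neg_nonneg, ← ofReal_zero, real_le_real] at hphase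
    exact normSq_eq_zero.mp (le_antisymm hphase (normSq_nonneg c))
  exact hu (by simpa [hc] using h)

variable [Fintype ι]

theorem star_dotProduct_self_eq_sum_normSq (v : ι → ℂ) :
    star v ⬝ᵥ v = ((∑ i, normSq (v i) : ℝ) : ℂ) := by
  simp [dotProduct, normSq_eq_conj_mul_self]

variable [DecidableEq ι]

theorem star_smul_single_dotProduct (c : ℂ) (i : ι) (w : ι → ℂ) :
    star (c • Pi.single i 1) ⬝ᵥ w = conj c * w i := by
  simp [Pi.star_single]

theorem star_dotProduct_smul_single (c : ℂ) (i : ι) (w : ι → ℂ) :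
    star w ⬝ᵥ (c • Pi.single i 1) = conj (w i) * c := by
  simp [mul_comm]

end DotProduct

theorem conj_exp_arg_mul_I_mul_self (z : ℂ) : conj (exp (arg z * I)) * z = ‖z‖ := by
  conv_lhs => rw [← norm_mul_exp_arg_mul_I z]
  rw [← exp_conj, map_mul, conj_ofReal, conj_I, mul_left_comm, ← exp_add]
  simp

section Householder

variable {n : ℕ}

theorem householder_mulVec (v u : Fin n → ℂ) :
    householder v *ᵥ u = u - (((2 / ∑ i, normSq (v i) : ℝ) : ℂ) * (star v ⬝ᵥ u)) • v := by
  rw [householder, sub_mulVec, one_mulVec, smul_mulVec, vecMulVec_mulVec, op_smul_eq_smul,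
    smul_smul]

theorem householder_sub_mulVec_self {x y : Fin n → ℂ} (hnorm : star y ⬝ᵥ y = star x ⬝ᵥ x)
    (hreal : star y ⬝ᵥ x = star x ⬝ᵥ y) : householder (x - y) *ᵥ x = y := by
  set v := x - y
  rcases eq_or_ne v 0 with hv | hv
  · -- `2 / 0 = 0` makes `householder 0 = 1`.
    rw [householder_mulVec, hv, smul_zero, sub_zero]
    exact sub_eq_zero.mp hv
  have hvv : star v ⬝ᵥ v = 2 * (star v ⬝ᵥ x) := by
    simp only [v, star_sub, sub_dotProduct, dotProduct_sub]
    linear_combination hnorm + hreal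
  have hd : star v ⬝ᵥ x ≠ 0 := by
    intro h
    apply hv
    rw [← dotProduct_star_self_eq_zero, hvv, h, mul_zero]
  have hcoeff : ((2 / ∑ i, normSq (v i) : ℝ) : ℂ) * (star v ⬝ᵥ x) = 1 := by
    rw [ofReal_div, ofReal_ofNat, ← star_dotProduct_self_eq_sum_normSq, hvv]
    field_simp
  rw [householder_mulVec, hcoeff, one_smul, sub_sub_cancel]

theorem householder_add_smul_single_mulVec {u : Fin n → ℂ} {c : ℂ} {i : Fin n}
    (hnorm : normSq c = ∑ j, normSq (u j)) (hphase : 0 ≤ conj c * u i) :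
    householder (u + c • Pi.single i 1) *ᵥ u = (-c) • Pi.single i 1 := by
  have hreal : conj (conj c * u i) = conj c * u i :=
    conj_eq_iff_im.mpr (nonneg_iff.mp hphase).2.symm
  rw [← sub_neg_eq_add, ← neg_smul]
  refine householder_sub_mulVec_self ?_ ?_
  · rw [star_smul_single_dotProduct, star_dotProduct_self_eq_sum_normSq, ← hnorm,
      normSq_eq_conj_mul_self]
    simp
  · rw [star_smul_single_dotProduct, star_dotProduct_smul_single, map_neg]
    rw [map_mul, conj_conj] at hreal
    linear_combination hreal

end Householder

/-- For a nonzero `u ∈ ℂⁿ`, with `θ = Arg u₁` and `v = u + e^{iθ} ‖u‖₂ e₁`, the vector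
`v` is nonzero and the Householder transformation `P(v)` maps `u` to
`-e^{iθ} ‖u‖₂ e₁`, zeroing out all trailing entries of `u`. -/
theorem householder_maps_to_e1 (n : ℕ) (hn : 1 ≤ n)
    (u : Fin n → ℂ) (hu : u ≠ 0) :
    let θ : ℝ := (u ⟨0, hn⟩).arg
    let nrm : ℝ := Real.sqrt (∑ i, Complex.normSq (u i))
    let v : Fin n → ℂ :=
      u + (Complex.exp (θ * Complex.I) * nrm) •
        (Pi.single (⟨0, hn⟩ : Fin n) 1 : Fin n → ℂ)
    v ≠ 0 ∧
      (householder v).mulVec u =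
        (-(Complex.exp (θ * Complex.I) * nrm)) •
          (Pi.single (⟨0, hn⟩ : Fin n) 1 : Fin n → ℂ) := by
  intro θ nrm v
  have hphase : conj (exp (θ * I) * nrm) * u ⟨0, hn⟩ = (nrm * ‖u ⟨0, hn⟩‖ : ℝ) := by
    rw [map_mul, conj_ofReal, mul_right_comm, conj_exp_arg_mul_I_mul_self, ofReal_mul, mul_comm]
  have hphase_nonneg : 0 ≤ conj (exp (θ * I) * nrm) * u ⟨0, hn⟩ := by
    rw [hphase]
    exact_mod_cast mul_nonneg (Real.sqrt_nonneg _) (norm_nonneg _)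
  have hnorm : normSq (exp (θ * I) * nrm) = ∑ i, normSq (u i) := by
    rw [normSq_mul, normSq_ofReal, normSq_eq_norm_sq, norm_exp_ofReal_mul_I, one_pow, one_mul,
      Real.mul_self_sqrt (Finset.sum_nonneg fun i _ => normSq_nonneg (u i))]
  exact ⟨add_smul_single_ne_zero hu hphase_nonneg,
    householder_add_smul_single_mulVec hnorm hphase_nonneg⟩
end
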